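/- arXiv:2603.15993 — 2 statements merged into one kernel-verified Lean document; each statement's English description precedes it below -/
import Mathlib

section
/- Let n ≥ 1, p₁*,...,pₙ* ∈ ℝ² with center of mass p_cm, polar moment J_p > 0, and rotational mode components [v_r]ₖ = (1/√J_p) Ω(pₖ* − p_cm). Define the 2×2 DC gain block [P₀]ⱼᵢ = (1/n)I₂ + [v_r]ⱼ [v_r]ᵢᵀ. Then det([P₀]ⱼᵢ) = 0 if and only if ⟨pᵢ* − p_cm, pⱼ* − p_cm⟩ = −J_p/n. -/
open Matrix Finset

noncomputable def Omega : Matrix (Fin 2) (Fin 2) ℝ := !![0, -1; 1, 0]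

theorem spatial_locus_of_transmission_zeros (n : ℕ) (hn : 1 ≤ n)
    (p : Fin n → Fin 2 → ℝ)
    (pcm : Fin 2 → ℝ) (hpcm : pcm = ((n : ℝ))⁻¹ • ∑ k, p k)
    (Jp : ℝ) (hJp : Jp = ∑ k, (p k - pcm) ⬝ᵥ (p k - pcm)) (hJpos : 0 < Jp)
    (vr : Fin n → Fin 2 → ℝ)
    (hvr : ∀ k, vr k = (Real.sqrt Jp)⁻¹ • Omega.mulVec (p k - pcm))
    (i j : Fin n)
    (P0 : Matrix (Fin 2) (Fin 2) ℝ)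
    (hP0 : P0 = ((n : ℝ))⁻¹ • (1 : Matrix (Fin 2) (Fin 2) ℝ) + vecMulVec (vr j) (vr i)) :
    P0.det = 0 ↔ (p i - pcm) ⬝ᵥ (p j - pcm) = -(Jp / n) := by
  have hn0 : (0:ℝ) < (n:ℝ) := by exact_mod_cast hn
  have hJ0 : Jp ≠ 0 := ne_of_gt hJpos
  set s := (Real.sqrt Jp)⁻¹ with hs
  have hs2 : s * s = Jp⁻¹ := by
    rw [hs, ← mul_inv, Real.mul_self_sqrt hJpos.le]
  have h0 : ∀ k, vr k 0 = s * (pcm 1 - p k 1) := by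
    intro k
    rw [hvr]
    simp [Omega, Matrix.mulVec, dotProduct, Fin.sum_univ_two]
  have h1 : ∀ k, vr k 1 = s * (p k 0 - pcm 0) := by
    intro k
    rw [hvr]
    simp [Omega, Matrix.mulVec, dotProduct, Fin.sum_univ_two]
  have hdot : (p i - pcm) ⬝ᵥ (p j - pcm)
      = (p i 0 - pcm 0) * (p j 0 - pcm 0) + (p i 1 - pcm 1) * (p j 1 - pcm 1) := by
    simp [dotProduct, Fin.sum_univ_two]
  have hdet : P0.det = ((n:ℝ))⁻¹ * ((n:ℝ))⁻¹
      + ((n:ℝ))⁻¹ * Jp⁻¹ * ((p i - pcm) ⬝ᵥ (p j - pcm)) := by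
    rw [Matrix.det_fin_two, hP0]
    simp only [Matrix.add_apply, Matrix.smul_apply, Matrix.one_apply, vecMulVec_apply,
      h0, h1, smul_eq_mul]
    norm_num
    rw [← hs2]
    ring
  rw [hdet, hdot]
  constructor
  · intro h
    field_simp at h ⊢
    nlinarith [h]
  · intro h
    rw [h]
    field_simp
    ring
end

section
/- Omnidirectional transmission: if pⱼ* lies in the global transmission polygon 𝒞 = ⋂ᵢ {x ∈ ℝ² : ⟨pᵢ* − p_cm, x − p_cm⟩ > −J_p/n}, then for every actuator index i the DC gain matrix [P₀]ⱼᵢ = (1/n)I₂ + [v_r]ⱼ[v_r]ᵢᵀ is invertible. -/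
open Matrix Finset

/-!
The matrix `(1/n) I + [v_r]ⱼ [v_r]ᵢᵀ` is a rank-one perturbation of a multiple of the identity,
so by the matrix determinant lemma its determinant is `n⁻² (1 + n ⟨[v_r]ᵢ, [v_r]ⱼ⟩)`. Since `Ω` is a
rotation, `⟨[v_r]ᵢ, [v_r]ⱼ⟩ = J_p⁻¹ ⟨pᵢ* − p_cm, pⱼ* − p_cm⟩`, and membership of `pⱼ*` in the
transmission polygon says exactly that `1 + (n / J_p) ⟨pᵢ* − p_cm, pⱼ* − p_cm⟩ > 0`.
-/

theorem Matrix.det_smul_one_add_vecMulVec {K m : Type*} [Field K] [Fintype m] [DecidableEq m]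
    {a : K} (ha : a ≠ 0) (u v : m → K) :
    (a • (1 : Matrix m m K) + vecMulVec u v).det = a ^ Fintype.card m * (1 + a⁻¹ * (v ⬝ᵥ u)) := by
  have hsplit : a • (1 : Matrix m m K) + vecMulVec u v
      = a • (1 + replicateCol Unit (a⁻¹ • u) * replicateRow Unit v) := by
    rw [← vecMulVec_eq, smul_add, smul_vecMulVec, smul_smul, mul_inv_cancel₀ ha, one_smul]
  rw [hsplit, det_smul, det_one_add_replicateCol_mul_replicateRow, dotProduct_smul, smul_eq_mul]

theorem Matrix.mulVec_dotProduct_mulVec_of_transpose_mul_self {R m n : Type*} [CommSemiring R]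
    [Fintype m] [Fintype n] [DecidableEq n] {A : Matrix m n R} (hA : Aᵀ * A = 1) (x y : n → R) :
    A *ᵥ x ⬝ᵥ A *ᵥ y = x ⬝ᵥ y := by
  rw [dotProduct_mulVec, ← vecMul_transpose, vecMul_vecMul, hA, vecMul_one]

theorem Omega_transpose_mul_self : Omegaᵀ * Omega = 1 := by
  ext i j
  fin_cases i <;> fin_cases j <;> simp [Omega, mul_apply, Fin.sum_univ_two]

theorem omnidirectional_transmission_general (n : ℕ)
    (p : Fin n → Fin 2 → ℝ)
    (pcm : Fin 2 → ℝ)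
    (Jp : ℝ) (hJpos : 0 < Jp)
    (vr : Fin n → Fin 2 → ℝ)
    (hvr : ∀ k, vr k = (Real.sqrt Jp)⁻¹ • Omega.mulVec (p k - pcm))
    (j : Fin n)
    (hj : p j ∈ ⋂ i : Fin n, {x : Fin 2 → ℝ | (p i - pcm) ⬝ᵥ (x - pcm) > -(Jp / n)}) :
    ∀ i : Fin n,
      IsUnit (((n : ℝ))⁻¹ • (1 : Matrix (Fin 2) (Fin 2) ℝ) + vecMulVec (vr j) (vr i)).det := by
  intro i
  have hn : (0 : ℝ) < n := Nat.cast_pos.mpr i.pos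
  have hdot : vr i ⬝ᵥ vr j = Jp⁻¹ * ((p i - pcm) ⬝ᵥ (p j - pcm)) := by
    rw [hvr, hvr, smul_dotProduct, dotProduct_smul,
      mulVec_dotProduct_mulVec_of_transpose_mul_self Omega_transpose_mul_self, smul_smul,
      ← mul_inv, Real.mul_self_sqrt hJpos.le, smul_eq_mul]
  have hpolygon : -(Jp / n) < (p i - pcm) ⬝ᵥ (p j - pcm) := Set.mem_iInter.mp hj i
  have hpos : 0 < 1 + n * (Jp⁻¹ * ((p i - pcm) ⬝ᵥ (p j - pcm))) := by
    have := mul_lt_mul_of_pos_left hpolygon (div_pos hn hJpos)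
    field_simp at this ⊢
    linarith
  rw [det_smul_one_add_vecMulVec (inv_ne_zero hn.ne'), inv_inv, hdot]
  exact (mul_pos (by positivity) hpos).ne'.isUnit

theorem omnidirectional_transmission (n : ℕ) (hn : 1 ≤ n)
    (p : Fin n → Fin 2 → ℝ)
    (pcm : Fin 2 → ℝ) (hpcm : pcm = ((n : ℝ))⁻¹ • ∑ k, p k)
    (Jp : ℝ) (hJp : Jp = ∑ k, (p k - pcm) ⬝ᵥ (p k - pcm)) (hJpos : 0 < Jp)
    (vr : Fin n → Fin 2 → ℝ)
    (hvr : ∀ k, vr k = (Real.sqrt Jp)⁻¹ • Omega.mulVec (p k - pcm))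
    (j : Fin n)
    (hj : p j ∈ ⋂ i : Fin n, {x : Fin 2 → ℝ | (p i - pcm) ⬝ᵥ (x - pcm) > -(Jp / n)}) :
    ∀ i : Fin n,
      IsUnit (((n : ℝ))⁻¹ • (1 : Matrix (Fin 2) (Fin 2) ℝ) + vecMulVec (vr j) (vr i)).det :=
  omnidirectional_transmission_general n p pcm Jp hJpos vr hvr j hj
end
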